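/- Let θ be a nonempty shifted skew diagram that is a row or a column, and let p ≥ 1 be an integer. If θ contains a diagonal box, then C(θ,p) = δ_{p,|θ|} - δ_{p,|θ|-1} when θ is a column, and C(θ,p) = δ_{p,|θ|} when θ is not a column. If θ contains no diagonal box, then C(θ,p) = 2·δ_{p,|θ|} - δ_{p,|θ|-1}. Here δ denotes the Kronecker delta. -/

import Mathlib

/-- `hcoef a b = Σ_{j=0}^{min(a,b)} (-1)^j 2^{a-j} binom(a,j)`; it is `0` when `b < 0`. -/
def hcoef (a : ℕ) (b : ℤ) : ℤ :=
  ∑ j ∈ Finset.range (a + 1),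
    if (j : ℤ) ≤ b then (-1) ^ j * 2 ^ (a - j) * (a.choose j) else 0

attribute [local instance] Classical.propDecidable

/-- The south-east corners of a finite set of boxes: boxes `(i,j)` such that
neither `(i+1,j)` nor `(i,j+1)` belongs to the set. -/
def seCorners (θ : Finset (ℤ × ℤ)) : Finset (ℤ × ℤ) :=
  θ.filter fun b => (b.1 + 1, b.2) ∉ θ ∧ (b.1, b.2 + 1) ∉ θ

/-- The south-east rim of `θ`: boxes `(i,j) ∈ θ` such that no box `(i',j') ∈ θ`
has `i' > i` and `j' > j`. -/
def seRim (θ : Finset (ℤ × ℤ)) : Finset (ℤ × ℤ) :=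
  θ.filter fun b => ∀ b' ∈ θ, ¬ (b.1 < b'.1 ∧ b.2 < b'.2)

/-- `d(θ)`: the number of boxes in the south-east rim of `θ`. -/
def dRim (θ : Finset (ℤ × ℤ)) : ℕ := (seRim θ).card

/-- `θ` is a rim if it equals its own south-east rim. -/
def IsRim (θ : Finset (ℤ × ℤ)) : Prop := θ = seRim θ

/-- Two boxes are adjacent (connected) if they share a side. -/
def Adjacent (b b' : ℤ × ℤ) : Prop := |b.1 - b'.1| + |b.2 - b'.2| = 1

/-- `b'` can be reached from `b` by a chain of adjacent boxes of `θ`. -/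
def Reach (θ : Finset (ℤ × ℤ)) (b b' : ℤ × ℤ) : Prop :=
  Relation.ReflTransGen (fun x y => y ∈ θ ∧ Adjacent x y) b b'

/-- The connected components of `θ`. -/
noncomputable def comps (θ : Finset (ℤ × ℤ)) : Finset (Finset (ℤ × ℤ)) :=
  θ.image fun b => θ.filter fun b' => Reach θ b b'

/-- `N(θ)`: the number of connected components of `θ`. -/
noncomputable def Ncomp (θ : Finset (ℤ × ℤ)) : ℕ := (comps θ).card

/-- `N⁻(θ) = max(N(θ) - 1, 0)`. -/
noncomputable def Nminus (θ : Finset (ℤ × ℤ)) : ℕ := Ncomp θ - 1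

/-- `N'(θ)`: the number of connected components of `θ` containing no diagonal box. -/
noncomputable def Nprime (θ : Finset (ℤ × ℤ)) : ℕ :=
  ((comps θ).filter fun c => ∀ b ∈ c, b.1 ≠ b.2).card

/-- `B(θ,p) = Σ_S (-1)^{|S|} h(N⁻(θ∖S), d(θ∖S) - p)`, the sum over subsets `S`
of the set of south-east corners of `θ`. -/
noncomputable def Bcoef (θ : Finset (ℤ × ℤ)) (p : ℤ) : ℤ :=
  ∑ S ∈ (seCorners θ).powerset,
    (-1) ^ S.card * hcoef (Nminus (θ \ S)) ((dRim (θ \ S) : ℤ) - p)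

/-- `C(θ,p) = Σ_S (-1)^{|S|} h(N'(θ∖S), d(θ∖S) - p)`, the sum over subsets `S`
of the set of south-east corners of `θ`. -/
noncomputable def Ccoef (θ : Finset (ℤ × ℤ)) (p : ℤ) : ℤ :=
  ∑ S ∈ (seCorners θ).powerset,
    (-1) ^ S.card * hcoef (Nprime (θ \ S)) ((dRim (θ \ S) : ℤ) - p)

/-- A strict partition with largest part at most `n`, encoded as a function
with `lam i = 0` for `i` beyond the length. -/
def IsStrictPartition (n : ℕ) (lam : ℤ → ℤ) : Prop :=
  lam 1 ≤ (n : ℤ) ∧ (∀ i : ℤ, 1 ≤ i → 0 ≤ lam i) ∧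
  (∀ i : ℤ, 1 ≤ i → lam (i + 1) = 0 ∨ lam (i + 1) < lam i)

/-- The shifted Young diagram `{(i,j) : 1 ≤ i ≤ ℓ, i ≤ j ≤ λ_i + i - 1}` of a
strict partition. -/
noncomputable def shiftedD (n : ℕ) (lam : ℤ → ℤ) : Finset (ℤ × ℤ) :=
  (Finset.Icc (1 : ℤ) (n : ℤ) ×ˢ Finset.Icc (1 : ℤ) (2 * (n : ℤ))).filter
    fun b => b.1 ≤ b.2 ∧ b.2 ≤ lam b.1 + b.1 - 1

/-- `θ` is a shifted skew diagram: `θ = ν/λ` for strict partitions `λ ⊆ ν`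
with `ν_1 ≤ n`. -/
def IsShiftedSkewDiagram (n : ℕ) (θ : Finset (ℤ × ℤ)) : Prop :=
  ∃ lam nu : ℤ → ℤ, IsStrictPartition n lam ∧ IsStrictPartition n nu ∧
    (∀ i : ℤ, 1 ≤ i → lam i ≤ nu i) ∧ θ = shiftedD n nu \ shiftedD n lam

/-- All boxes of `φ` lie in a single column. -/
def IsCol (φ : Finset (ℤ × ℤ)) : Prop := ∃ j : ℤ, ∀ b ∈ φ, b.2 = j

/-- Kronecker delta on integers. -/
def kdelta (x y : ℤ) : ℤ := if x = y then 1 else 0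

/-! A row or column of a shifted skew diagram is a segment of consecutive boxes, and a column is
the transpose of a row; corners, rims, components and diagonal boxes are all preserved by
transposition, so only rows need to be computed. A segment is connected, is its own south-east
rim and has a single south-east corner, its last box, so the sum defining `C(θ,p)` has just two
terms `h(N', d - p)`, with `N' = 0` or `1` according as the segment meets the diagonal; and
`h(0,b) = [b ≥ 0]`, `h(1,b) = 2[b ≥ 0] - [b ≥ 1]`. In a shifted diagram a row can meet the
diagonal only in its first box and a column only in its last box, the one removed as corner. -/

open Finset

def transpose (θ : Finset (ℤ × ℤ)) : Finset (ℤ × ℤ) :=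
  θ.map (Equiv.prodComm ℤ ℤ).toEmbedding

@[simp] lemma mem_transpose {θ : Finset (ℤ × ℤ)} {x : ℤ × ℤ} :
    x ∈ transpose θ ↔ x.swap ∈ θ := by
  simp [transpose, mem_map_equiv]

@[simp] lemma transpose_transpose (θ : Finset (ℤ × ℤ)) : transpose (transpose θ) = θ := by
  ext x; simp

lemma card_transpose (θ : Finset (ℤ × ℤ)) : (transpose θ).card = θ.card :=
  card_map _

lemma transpose_sdiff (θ S : Finset (ℤ × ℤ)) :
    transpose (θ \ S) = transpose θ \ transpose S :=
  Finset.map_sdiff _ _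

lemma transpose_subset_transpose {S θ : Finset (ℤ × ℤ)} (h : S ⊆ θ) :
    transpose S ⊆ transpose θ :=
  map_subset_map.2 h

lemma exists_diag_transpose {θ : Finset (ℤ × ℤ)} :
    (∃ x ∈ transpose θ, x.1 = x.2) ↔ ∃ x ∈ θ, x.1 = x.2 :=
  ⟨fun ⟨x, hx, hd⟩ => ⟨x.swap, mem_transpose.1 hx, hd.symm⟩,
    fun ⟨x, hx, hd⟩ => ⟨x.swap, by simpa using hx, hd.symm⟩⟩

lemma seCorners_transpose (θ : Finset (ℤ × ℤ)) :
    seCorners (transpose θ) = transpose (seCorners θ) := by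
  ext ⟨x, y⟩
  simp only [seCorners, mem_filter, mem_transpose, Prod.swap_prod_mk]
  tauto

lemma dRim_transpose (θ : Finset (ℤ × ℤ)) : dRim (transpose θ) = dRim θ := by
  have : seRim (transpose θ) = transpose (seRim θ) := by
    ext ⟨x, y⟩
    simp only [seRim, mem_filter, mem_transpose, Prod.swap_prod_mk, Prod.forall]
    exact and_congr_right fun _ => ⟨fun h a b hab => by have := h b a hab; tauto,
      fun h a b hab => by have := h b a hab; tauto⟩
  rw [dRim, dRim, this, card_transpose]

lemma Reach.transpose {θ : Finset (ℤ × ℤ)} {x y : ℤ × ℤ} (h : Reach θ x y) :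
    Reach (transpose θ) x.swap y.swap := by
  refine Relation.ReflTransGen.lift Prod.swap (fun a b hab => ⟨?_, ?_⟩) _ _ h
  · simpa using hab.1
  · have := hab.2
    simp only [Adjacent, Prod.fst_swap, Prod.snd_swap] at this ⊢
    linarith

lemma reach_transpose_iff {θ : Finset (ℤ × ℤ)} {x y : ℤ × ℤ} :
    Reach (transpose θ) x y ↔ Reach θ x.swap y.swap :=
  ⟨fun h => by simpa using h.transpose, fun h => by simpa using h.transpose⟩

lemma comps_transpose (θ : Finset (ℤ × ℤ)) :
    comps (transpose θ) = (comps θ).image transpose := by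
  have hcomp : ∀ x, (transpose θ).filter (Reach (transpose θ) x) =
      transpose (θ.filter (Reach θ x.swap)) := by
    intro x; ext y; simp [reach_transpose_iff]
  ext c
  simp only [comps, hcomp, mem_image, mem_transpose, exists_exists_and_eq_and]
  exact ⟨fun ⟨a, ha, h⟩ => ⟨a.swap, ha, h⟩,
    fun ⟨a, ha, h⟩ => ⟨a.swap, by simpa using ha, by simpa using h⟩⟩

lemma Nprime_transpose (θ : Finset (ℤ × ℤ)) : Nprime (transpose θ) = Nprime θ := by
  rw [Nprime, Nprime, comps_transpose, filter_image,
    card_image_of_injective _ (Function.LeftInverse.injective transpose_transpose)]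
  congr 1
  refine filter_congr fun c _ => ⟨fun h b hb => ?_, fun h b hb => ?_⟩
  · simpa [eq_comm] using h b.swap (by simpa using hb)
  · simpa [eq_comm] using h b.swap (mem_transpose.1 hb)

lemma Ccoef_transpose (θ : Finset (ℤ × ℤ)) (p : ℤ) : Ccoef (transpose θ) p = Ccoef θ p := by
  refine sum_nbij' transpose transpose (fun S hS => ?_) (fun S hS => ?_)
    (fun S _ => transpose_transpose S) (fun S _ => transpose_transpose S) fun S _ => ?_
  · simpa [seCorners_transpose] using transpose_subset_transpose (mem_powerset.1 hS)
  · simpa [seCorners_transpose] using transpose_subset_transpose (mem_powerset.1 hS)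
  · rw [show transpose θ \ S = transpose (θ \ transpose S) by
      rw [transpose_sdiff, transpose_transpose], Nprime_transpose, dRim_transpose, card_transpose]

lemma comps_eq_singleton {θ : Finset (ℤ × ℤ)} (hne : θ.Nonempty)
    (hreach : ∀ x ∈ θ, ∀ y ∈ θ, Reach θ x y) : comps θ = {θ} := by
  rw [comps, image_congr fun x hx => filter_true_of_mem (hreach x hx)]
  exact image_const hne θ

lemma Nprime_of_comps_eq_singleton {θ : Finset (ℤ × ℤ)} (h : comps θ = {θ}) :
    Nprime θ = if ∃ x ∈ θ, x.1 = x.2 then 0 else 1 := by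
  rw [Nprime, h, filter_singleton]
  by_cases hd : ∃ x ∈ θ, x.1 = x.2
  · obtain ⟨x, hx, hxd⟩ := hd
    rw [if_neg fun hoff => hoff x hx hxd, if_pos ⟨x, hx, hxd⟩, card_empty]
  · rw [if_pos fun x hx hxd => hd ⟨x, hx, hxd⟩, if_neg hd, card_singleton]

lemma hcoef_zero (b : ℤ) : hcoef 0 b = if 0 ≤ b then 1 else 0 := by
  simp [hcoef]

lemma hcoef_one (b : ℤ) :
    hcoef 1 b = (if 0 ≤ b then 2 else 0) + (if 1 ≤ b then -1 else 0) := by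
  simp [hcoef, sum_range_succ]

lemma Ccoef_of_seCorners_eq_singleton {θ : Finset (ℤ × ℤ)} {c : ℤ × ℤ}
    (hc : seCorners θ = {c}) (p : ℤ) :
    Ccoef θ p = hcoef (Nprime θ) ((dRim θ : ℤ) - p)
      - hcoef (Nprime (θ \ {c})) ((dRim (θ \ {c}) : ℤ) - p) := by
  have hpow : ({c} : Finset (ℤ × ℤ)).powerset = {∅, {c}} := by
    ext S; simp [subset_singleton_iff]
  rw [Ccoef, hc, hpow, sum_pair (singleton_ne_empty c).symm]
  simp [sub_eq_add_neg]

section RowSegment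

noncomputable def rowSeg (i a b : ℤ) : Finset (ℤ × ℤ) := {i} ×ˢ Icc a b

variable {i a b : ℤ}

@[simp] lemma mem_rowSeg {x : ℤ × ℤ} : x ∈ rowSeg i a b ↔ x.1 = i ∧ a ≤ x.2 ∧ x.2 ≤ b := by
  rw [rowSeg, mem_product, mem_singleton, mem_Icc]

lemma card_rowSeg : (rowSeg i a b).card = (b + 1 - a).toNat := by
  simp [rowSeg, Int.card_Icc]

lemma rowSeg_eq_empty (h : b < a) : rowSeg i a b = ∅ := by
  simp [rowSeg, h]

lemma seCorners_rowSeg (hab : a ≤ b) : seCorners (rowSeg i a b) = {(i, b)} := by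
  ext ⟨x, y⟩
  simp only [seCorners, mem_filter, mem_rowSeg, mem_singleton, Prod.mk.injEq]
  omega

lemma rowSeg_sdiff_corner : rowSeg i a b \ {(i, b)} = rowSeg i a (b - 1) := by
  ext ⟨x, y⟩
  simp only [mem_sdiff, mem_rowSeg, mem_singleton, Prod.mk.injEq]
  omega

lemma dRim_rowSeg : dRim (rowSeg i a b) = (b + 1 - a).toNat := by
  rw [dRim, seRim, filter_true_of_mem, card_rowSeg]
  rintro ⟨x, y⟩ hx ⟨x', y'⟩ hx'
  simp only [mem_rowSeg] at hx hx'
  omega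

lemma reach_rowSeg {x y : ℤ × ℤ} (hx : x ∈ rowSeg i a b) (hy : y ∈ rowSeg i a b) :
    Reach (rowSeg i a b) x y := by
  have hend : ∀ z, a ≤ z → z ≤ b →
      Reach (rowSeg i a b) (i, z) (i, a) ∧ Reach (rowSeg i a b) (i, a) (i, z) := by
    intro z hz
    induction z, hz using Int.leInduction with
    | base => exact fun _ => ⟨.refl, .refl⟩
    | succ z hz ih =>
      intro hzb
      obtain ⟨hto, hfrom⟩ := ih (by omega)
      exact ⟨.head ⟨by simp; omega, by simp [Adjacent]⟩ hto,
        .tail hfrom ⟨by simp; omega, by simp [Adjacent]⟩⟩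
  obtain ⟨x1, x2⟩ := x
  obtain ⟨y1, y2⟩ := y
  simp only [mem_rowSeg] at hx hy
  obtain ⟨rfl, hx⟩ := hx
  obtain ⟨rfl, hy⟩ := hy
  exact (hend x2 hx.1 hx.2).1.trans (hend y2 hy.1 hy.2).2

lemma exists_diag_rowSeg : (∃ x ∈ rowSeg i a b, x.1 = x.2) ↔ a ≤ i ∧ i ≤ b :=
  ⟨fun ⟨x, hx, hd⟩ => by simp only [mem_rowSeg] at hx; omega,
    fun h => ⟨(i, i), by simpa using h, rfl⟩⟩

lemma Nprime_rowSeg (hab : a ≤ b) : Nprime (rowSeg i a b) = if a ≤ i ∧ i ≤ b then 0 else 1 := by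
  rw [Nprime_of_comps_eq_singleton (comps_eq_singleton ⟨(i, a), by simpa using hab⟩
    fun _ hx _ hy => reach_rowSeg hx hy)]
  simp only [exists_diag_rowSeg]

lemma isCol_rowSeg_iff (hab : a ≤ b) : IsCol (rowSeg i a b) ↔ a = b := by
  constructor
  · rintro ⟨j, hj⟩
    have ha := hj (i, a) (by simpa using hab)
    have hb := hj (i, b) (by simpa using hab)
    simp_all
  · rintro rfl
    exact ⟨a, fun x hx => by simp only [mem_rowSeg] at hx; omega⟩

lemma Ccoef_rowSeg (hab : a ≤ b) {p : ℤ} (hp : 1 ≤ p) :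
    Ccoef (rowSeg i a b) p =
      if a ≤ i ∧ i < b then kdelta p (b + 1 - a)
      else if i = b then kdelta p (b + 1 - a) - kdelta p (b - a)
      else 2 * kdelta p (b + 1 - a) - kdelta p (b - a) := by
  rw [Ccoef_of_seCorners_eq_singleton (seCorners_rowSeg hab), rowSeg_sdiff_corner,
    Nprime_rowSeg hab, dRim_rowSeg]
  rcases hab.lt_or_eq with hlt | rfl
  · rw [Nprime_rowSeg (by omega), dRim_rowSeg]
    simp only [kdelta]
    split_ifs <;> simp only [hcoef_zero, hcoef_one] <;> split_ifs <;> omega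
  · rw [rowSeg_eq_empty (by omega)]
    simp only [Nprime, comps, dRim, seRim, kdelta, filter_empty, image_empty, card_empty]
    split_ifs <;> simp only [hcoef_zero, hcoef_one] <;> split_ifs <;> omega

end RowSegment

lemma exists_eq_rowSeg_of_row {θ : Finset (ℤ × ℤ)} {i : ℤ} (hne : θ.Nonempty)
    (hrow : ∀ x ∈ θ, x.1 = i)
    (hconv : ∀ a b y, (i, a) ∈ θ → (i, b) ∈ θ → a ≤ y → y ≤ b → (i, y) ∈ θ) :
    ∃ a b, a ≤ b ∧ θ = rowSeg i a b := by
  obtain ⟨⟨i₁, a⟩, ha, hmin⟩ := θ.exists_min_image Prod.snd hne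
  obtain ⟨⟨i₂, b⟩, hb, hmax⟩ := θ.exists_max_image Prod.snd hne
  obtain rfl : i₁ = i := hrow _ ha
  obtain rfl : i₂ = i₁ := hrow _ hb
  refine ⟨a, b, hmin _ hb, ?_⟩
  ext ⟨x, y⟩
  rw [mem_rowSeg]
  refine ⟨fun hxy => ⟨hrow _ hxy, hmin _ hxy, hmax _ hxy⟩, ?_⟩
  rintro ⟨rfl, hay, hyb⟩
  exact hconv a b y ha hb hay hyb

section ShiftedSkewDiagram

variable {n : ℕ}

lemma mem_shiftedD {mu : ℤ → ℤ} {x y : ℤ} :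
    (x, y) ∈ shiftedD n mu ↔
      (1 ≤ x ∧ x ≤ n) ∧ (1 ≤ y ∧ y ≤ 2 * (n : ℤ)) ∧ x ≤ y ∧ y ≤ mu x + x - 1 := by
  simp [shiftedD, and_assoc]

lemma IsStrictPartition.mem_shiftedD_of_le {mu : ℤ → ℤ} (hmu : IsStrictPartition n mu)
    {x x' y : ℤ} (hx : 1 ≤ x) (hxx' : x ≤ x') (h : (x', y) ∈ shiftedD n mu) :
    (x, y) ∈ shiftedD n mu := by
  induction x', hxx' using Int.leInduction with
  | base => exact h
  | succ z hz ih =>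
    have step := hmu.2.2 z (hx.trans hz)
    rw [mem_shiftedD] at h ih
    exact ih (by omega)

variable {θ : Finset (ℤ × ℤ)}

lemma IsShiftedSkewDiagram.fst_le_snd (hθ : IsShiftedSkewDiagram n θ) {x : ℤ × ℤ}
    (hx : x ∈ θ) : x.1 ≤ x.2 := by
  obtain ⟨lam, nu, -, -, -, rfl⟩ := hθ
  have := (mem_sdiff.1 hx).1
  rw [← Prod.mk.eta (p := x), mem_shiftedD] at this
  exact this.2.2.1

lemma IsShiftedSkewDiagram.mem_of_mem_row (hθ : IsShiftedSkewDiagram n θ) {i a b y : ℤ}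
    (ha : (i, a) ∈ θ) (hb : (i, b) ∈ θ) (hay : a ≤ y) (hyb : y ≤ b) : (i, y) ∈ θ := by
  obtain ⟨lam, nu, -, -, -, rfl⟩ := hθ
  simp only [mem_sdiff, mem_shiftedD] at ha hb ⊢
  omega

lemma IsShiftedSkewDiagram.mem_of_mem_col (hθ : IsShiftedSkewDiagram n θ) {j a b x : ℤ}
    (ha : (a, j) ∈ θ) (hb : (b, j) ∈ θ) (hax : a ≤ x) (hxb : x ≤ b) : (x, j) ∈ θ := by
  obtain ⟨lam, nu, hlam, hnu, -, rfl⟩ := hθ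
  rw [mem_sdiff] at ha hb ⊢
  have ha1 : 1 ≤ a := (mem_shiftedD.1 ha.1).1.1
  exact ⟨hnu.mem_shiftedD_of_le (by omega) hxb hb.1,
    fun hx => ha.2 (hlam.mem_shiftedD_of_le ha1 hax hx)⟩

lemma IsShiftedSkewDiagram.eq_rowSeg_or_eq_transpose (hθ : IsShiftedSkewDiagram n θ)
    (hne : θ.Nonempty) (hrowcol : (∃ i : ℤ, ∀ b ∈ θ, b.1 = i) ∨ IsCol θ) :
    (∃ i a b, i ≤ a ∧ a ≤ b ∧ θ = rowSeg i a b) ∨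
      (∃ j a b, a ≤ b ∧ b ≤ j ∧ θ = transpose (rowSeg j a b)) := by
  rcases hrowcol with ⟨i, hrow⟩ | ⟨j, hcol⟩
  · obtain ⟨a, b, hab, rfl⟩ := exists_eq_rowSeg_of_row hne hrow fun _ _ _ => hθ.mem_of_mem_row
    exact .inl ⟨i, a, b, hθ.fst_le_snd (x := (i, a)) (by simpa using hab), hab, rfl⟩
  · obtain ⟨a, b, hab, hθt⟩ := exists_eq_rowSeg_of_row (i := j) (θ := transpose θ)
      (by simpa [transpose] using hne) (fun x hx => hcol _ (mem_transpose.1 hx))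
      fun a b y ha hb hay hyb => by
        simpa using hθ.mem_of_mem_col (by simpa using ha) (by simpa using hb) hay hyb
    rw [← transpose_transpose θ, hθt]
    refine .inr ⟨j, a, b, hab, ?_, rfl⟩
    have hb : (j, b) ∈ transpose θ := by rw [hθt]; simpa using hab
    exact hθ.fst_le_snd (mem_transpose.1 hb)

end ShiftedSkewDiagram

theorem Ccoef_of_row_or_col_general (n : ℕ) (θ : Finset (ℤ × ℤ))
    (hθ : IsShiftedSkewDiagram n θ) (hne : θ.Nonempty)
    (hrowcol : (∃ i : ℤ, ∀ b ∈ θ, b.1 = i) ∨ IsCol θ)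
    (p : ℤ) (hp : 1 ≤ p) :
    ((∃ b ∈ θ, b.1 = b.2) →
      (IsCol θ → Ccoef θ p = kdelta p (θ.card : ℤ) - kdelta p ((θ.card : ℤ) - 1)) ∧
      (¬ IsCol θ → Ccoef θ p = kdelta p (θ.card : ℤ))) ∧
    ((∀ b ∈ θ, b.1 ≠ b.2) →
      Ccoef θ p = 2 * kdelta p (θ.card : ℤ) - kdelta p ((θ.card : ℤ) - 1)) := by
  simp only [Ne, ← not_exists, exists_prop]
  rcases hθ.eq_rowSeg_or_eq_transpose hne hrowcol with
    ⟨i, a, b, hia, hab, rfl⟩ | ⟨j, a, b, hab, hbj, rfl⟩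
  · have hcard : ((rowSeg i a b).card : ℤ) = b + 1 - a := by rw [card_rowSeg]; omega
    rw [hcard, Ccoef_rowSeg hab hp, isCol_rowSeg_iff hab, exists_diag_rowSeg]
    refine ⟨fun hd => ⟨fun hcol => ?_, fun hncol => ?_⟩, fun hnd => ?_⟩ <;>
      simp only [kdelta] <;> split_ifs <;> omega
  · have hcol : IsCol (transpose (rowSeg j a b)) := ⟨j, fun x hx => by simp at hx; omega⟩
    have hcard : ((transpose (rowSeg j a b)).card : ℤ) = b + 1 - a := by
      rw [card_transpose, card_rowSeg]; omega
    rw [hcard, Ccoef_transpose, Ccoef_rowSeg hab hp, exists_diag_transpose, exists_diag_rowSeg]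
    refine ⟨fun hd => ⟨fun _ => ?_, fun hncol => absurd hcol hncol⟩, fun hnd => ?_⟩ <;>
      simp only [kdelta] <;> split_ifs <;> omega

/-- Let `θ` be a nonempty shifted skew diagram that is a row or a column and
let `p ≥ 1`.  If `θ` contains a diagonal box, then
`C(θ,p) = δ_{p,|θ|} - δ_{p,|θ|-1}` when `θ` is a column and
`C(θ,p) = δ_{p,|θ|}` when it is not; if `θ` contains no diagonal box, then
`C(θ,p) = 2·δ_{p,|θ|} - δ_{p,|θ|-1}`. -/
theorem Ccoef_of_row_or_col (n : ℕ) (hn : 0 < n) (θ : Finset (ℤ × ℤ))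
    (hθ : IsShiftedSkewDiagram n θ) (hne : θ.Nonempty)
    (hrowcol : (∃ i : ℤ, ∀ b ∈ θ, b.1 = i) ∨ IsCol θ)
    (p : ℤ) (hp : 1 ≤ p) :
    ((∃ b ∈ θ, b.1 = b.2) →
      (IsCol θ → Ccoef θ p = kdelta p (θ.card : ℤ) - kdelta p ((θ.card : ℤ) - 1)) ∧
      (¬ IsCol θ → Ccoef θ p = kdelta p (θ.card : ℤ))) ∧
    ((∀ b ∈ θ, b.1 ≠ b.2) →
      Ccoef θ p = 2 * kdelta p (θ.card : ℤ) - kdelta p ((θ.card : ℤ) - 1)) :=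
  Ccoef_of_row_or_col_general n θ hθ hne hrowcol p hp
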